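/- Let K ≥ 0 and x ∈ R^n with |x|_∞ ≤ K. Then for all indices i ≠ j, the off-diagonal partial derivative satisfies ∂φ_i/∂x_j(x) ≤ −((k−1)/(2(n−1)))·e^{−4(k−1)K}. -/

import Mathlib

/-!
Along the line `x + t • eⱼ` only the summands with `j ∈ s` move, so
`∂φᵢ/∂xⱼ = -(∑_{s ∋ j} e^{x̃ₛ}/(1 + e^{x̃ₛ+xᵢ})²) / ∑ₛ e^{x̃ₛ}/(1 + e^{x̃ₛ+xᵢ})`.
Write `e^{x̃ₛ} = e^{-xᵢ} tₛ` with `tₛ = e^{x̃ₛ+xᵢ} ∈ [T⁻¹, T]`, `T = e^{kK}`: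
every summand of the numerator is at least `e^{-xᵢ} T/(1+T)²` and every summand of the
denominator at most `e^{-xᵢ} T/(1+T)`. A proportion `(k-1)/(n-1)` of the `(k-1)`-subsets
of `{1,…,n} \ {i}` contain `j`, so the quotient is at least `(k-1)/((n-1)(1+T))`, and
`1 + T ≤ 2 e^{4(k-1)K}` because `k ≤ 4(k-1)`.
-/

/-- The fixed-point map `φ` for the ML equations of the beta model for `k`-uniform
hypergraphs on `n` nodes: `φ_i(x) = log d_i − log ∑_s e^{x̃_s}/(1 + e^{x̃_s + x_i})`,
the sum over all `(k−1)`-element subsets `s` of `{1,…,n} \ {i}`. -/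
noncomputable def phi (n k : ℕ) (d : Fin n → ℝ) (x : Fin n → ℝ) (i : Fin n) : ℝ :=
  Real.log (d i) -
    Real.log (∑ s ∈ Finset.powersetCard (k - 1) (Finset.univ.erase i),
      Real.exp (∑ j ∈ s, x j) / (1 + Real.exp ((∑ j ∈ s, x j) + x i)))

open Finset Real

lemma hasDerivAt_exp_div_one_add_exp (a b : ℝ) :
    HasDerivAt (fun a => exp a / (1 + exp (a + b))) (exp a / (1 + exp (a + b)) ^ 2) a := by
  have hden : 1 + exp (a + b) ≠ 0 := by positivity
  refine ((hasDerivAt_exp a).div (((hasDerivAt_id' a).add_const b).exp.const_add 1)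
    hden).congr_deriv ?_
  field_simp
  ring

lemma hasDerivAt_sum_exp_div_one_add_exp {ι : Type*} (P : Finset ι) (a c : ι → ℝ) (b : ℝ) :
    HasDerivAt (fun t => ∑ s ∈ P, exp (a s + t * c s) / (1 + exp (a s + t * c s + b)))
      (∑ s ∈ P, c s * (exp (a s) / (1 + exp (a s + b)) ^ 2)) 0 := by
  refine HasDerivAt.fun_sum fun s _ => ?_
  have hline : HasDerivAt (fun t => a s + t * c s) (c s) 0 := by
    simpa using ((hasDerivAt_id (0 : ℝ)).mul_const (c s)).const_add (a s)
  rw [mul_comm]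
  exact (hasDerivAt_exp_div_one_add_exp (a s) b).comp_of_eq 0 hline (by simp)

lemma exp_div_one_add_exp_le {a b L : ℝ} (h : a + b ≤ L) :
    exp a / (1 + exp (a + b)) ≤ exp (-b) * (exp L / (1 + exp L)) := by
  have ht : exp (a + b) ≤ exp L := exp_le_exp.2 h
  rw [show exp a = exp (-b) * exp (a + b) by rw [← exp_add]; ring_nf, mul_div_assoc]
  refine mul_le_mul_of_nonneg_left ?_ (exp_pos _).le
  rw [div_le_div_iff₀ (by positivity) (by positivity)]
  nlinarith

lemma exp_mul_le_exp_div_one_add_exp_sq {a b L : ℝ} (h : |a + b| ≤ L) :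
    exp (-b) * (exp L / (1 + exp L) ^ 2) ≤ exp a / (1 + exp (a + b)) ^ 2 := by
  obtain ⟨hlo, hhi⟩ := abs_le.1 h
  have htT : exp (a + b) ≤ exp L := exp_le_exp.2 hhi
  have hone : 1 ≤ exp (a + b) * exp L := by
    rw [← exp_add, one_le_exp_iff]
    linarith
  rw [show exp a = exp (-b) * exp (a + b) by rw [← exp_add]; ring_nf, mul_div_assoc]
  refine mul_le_mul_of_nonneg_left ?_ (exp_pos _).le
  rw [div_le_div_iff₀ (by positivity) (by positivity)]
  -- `t ↦ t / (1 + t)²` is invariant under `t ↦ t⁻¹` and decreasing on `[1, ∞)`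
  nlinarith [mul_nonneg (sub_nonneg.2 htT) (sub_nonneg.2 hone)]

lemma exp_neg_div_two_le_inv_one_add_exp {k K : ℝ} (hk : 2 ≤ k) (hK : 0 ≤ K) :
    exp (-(4 * (k - 1) * K)) / 2 ≤ (1 + exp (k * K))⁻¹ := by
  have h1 : 1 ≤ exp (4 * (k - 1) * K) := one_le_exp (by nlinarith)
  have h2 : exp (k * K) ≤ exp (4 * (k - 1) * K) := exp_le_exp.2 (by nlinarith)
  calc exp (-(4 * (k - 1) * K)) / 2 = (2 * exp (4 * (k - 1) * K))⁻¹ := by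
        rw [exp_neg]; ring
    _ ≤ (1 + exp (k * K))⁻¹ := inv_anti₀ (by positivity) (by linarith)

lemma abs_sum_add_le {ι : Type*} {x : ι → ℝ} {K : ℝ} (hx : ∀ l, |x l| ≤ K) (s : Finset ι)
    (i : ι) : |∑ l ∈ s, x l + x i| ≤ (#s + 1) * K := by
  have hs : ∑ l ∈ s, |x l| ≤ #s * K := by
    simpa using sum_le_card_nsmul s _ K fun l _ => hx l
  calc |∑ l ∈ s, x l + x i| ≤ ∑ l ∈ s, |x l| + |x i| :=
        (abs_add_le _ _).trans (add_le_add_left (abs_sum_le_sum_abs _ _) _)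
    _ ≤ (#s + 1) * K := by linarith [hx i]

lemma abs_sum_add_le_of_mem_powersetCard {n k : ℕ} (hk : 1 ≤ k) {x : Fin n → ℝ} {K : ℝ}
    (hx : ‖x‖ ≤ K) {i : Fin n} {s : Finset (Fin n)} (hs : s ∈ powersetCard (k - 1) (univ.erase i)) :
    |∑ l ∈ s, x l + x i| ≤ k * K := by
  have hxl : ∀ l, |x l| ≤ K := fun l => (norm_le_pi_norm x l).trans hx
  simpa [(mem_powersetCard.1 hs).2, Nat.cast_sub hk] using abs_sum_add_le hxl s i

lemma mul_card_div_card_le_sum_div_sum {ι : Type*} {P Q : Finset ι} {g h : ι → ℝ} {ρ M : ℝ}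
    (hpos : 0 < ∑ s ∈ P, g s) (hρ : 0 ≤ ρ) (hg : ∀ s ∈ P, g s ≤ M)
    (hh : ∀ s ∈ Q, ρ * M ≤ h s) :
    ρ * (#Q / #P) ≤ (∑ s ∈ Q, h s) / ∑ s ∈ P, g s := by
  have hQ := card_nsmul_le_sum Q h _ hh
  have hP := sum_le_card_nsmul P g M hg
  rw [nsmul_eq_mul] at hQ hP
  have hPM : 0 < #P * M := hpos.trans_le hP
  have hM : 0 < M := pos_of_mul_pos_right hPM (Nat.cast_nonneg _)
  have hPc : (0 : ℝ) < #P := pos_of_mul_pos_left hPM hM.le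
  calc ρ * (#Q / #P) = #Q * (ρ * M) / (#P * M) := by field_simp
    _ ≤ (∑ s ∈ Q, h s) / ∑ s ∈ P, g s :=
      div_le_div₀ ((mul_nonneg (Nat.cast_nonneg _) (mul_nonneg hρ hM.le)).trans hQ) hQ hpos hP

lemma card_mul_card_filter_mem_powersetCard {α : Type*} [DecidableEq α] {S : Finset α} {j : α}
    (hj : j ∈ S) {r : ℕ} (hr : 1 ≤ r) :
    #S * #{s ∈ powersetCard r S | j ∈ s} = r * #(powersetCard r S) := by
  obtain ⟨r, rfl⟩ : ∃ r', r = r' + 1 := ⟨r - 1, by omega⟩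
  obtain ⟨m, hm⟩ : ∃ m, #S = m + 1 := ⟨#S - 1, by have := card_pos.2 ⟨j, hj⟩; omega⟩
  have hfilter :
      {s ∈ powersetCard (r + 1) S | j ∈ s} = {s ∈ powersetCard (r + 1) S | {j} ⊆ s} := by
    simp only [singleton_subset_iff]
  rw [hfilter, card_filter_powersetCard_subset {j} S (r + 1) (singleton_subset_iff.2 hj)
    (by simp), card_powersetCard, card_singleton, hm, add_tsub_cancel_right,
    add_tsub_cancel_right, Nat.add_one_mul_choose_eq, mul_comm]

lemma card_filter_mem_div_card_powersetCard {α : Type*} [DecidableEq α] {S : Finset α} {j : α}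
    (hj : j ∈ S) {r : ℕ} (hr : 1 ≤ r) (hrS : r ≤ #S) :
    (#{s ∈ powersetCard r S | j ∈ s} : ℝ) / #(powersetCard r S) = r / #S := by
  have hP : (#(powersetCard r S) : ℝ) ≠ 0 := by simpa [Nat.choose_eq_zero_iff] using hrS
  have hS : (#S : ℝ) ≠ 0 := by simpa using (card_pos.2 ⟨j, hj⟩).ne'
  rw [div_eq_div_iff hP hS]
  norm_cast
  rw [mul_comm]
  exact card_mul_card_filter_mem_powersetCard hj hr

lemma powersetCard_pred_univ_erase_nonempty {n k : ℕ} (hkn : k ≤ n) (i : Fin n) :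
    (powersetCard (k - 1) (univ.erase i)).Nonempty :=
  powersetCard_nonempty.2 (by simp; omega)

lemma sum_exp_div_one_add_exp_pos {n k : ℕ} (hkn : k ≤ n) (x : Fin n → ℝ) (i : Fin n) :
    0 < ∑ s ∈ powersetCard (k - 1) (univ.erase i),
      exp (∑ l ∈ s, x l) / (1 + exp ((∑ l ∈ s, x l) + x i)) :=
  sum_pos (fun _ _ => by positivity) (powersetCard_pred_univ_erase_nonempty hkn i)

lemma hasLineDerivAt_phi_single {n k : ℕ} (hkn : k ≤ n) (d x : Fin n → ℝ) {i j : Fin n}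
    (hij : i ≠ j) :
    HasLineDerivAt ℝ (fun y => phi n k d y i)
      (-((∑ s ∈ powersetCard (k - 1) (univ.erase i) with j ∈ s,
          exp (∑ l ∈ s, x l) / (1 + exp ((∑ l ∈ s, x l) + x i)) ^ 2) /
        ∑ s ∈ powersetCard (k - 1) (univ.erase i),
          exp (∑ l ∈ s, x l) / (1 + exp ((∑ l ∈ s, x l) + x i))))
      x (Pi.single j 1) := by
  have h := ((hasDerivAt_sum_exp_div_one_add_exp (powersetCard (k - 1) (univ.erase i))
    (fun s => ∑ l ∈ s, x l) (fun s => if j ∈ s then 1 else 0) (x i)).log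
    (by simpa using (sum_exp_div_one_add_exp_pos hkn x i).ne')).const_sub (log (d i))
  unfold HasLineDerivAt
  simp only [phi, Pi.add_apply, Pi.smul_apply, smul_eq_mul, sum_add_distrib, ← mul_sum,
    Pi.single_apply, sum_ite_eq', hij, if_false, mul_zero, add_zero]
  convert h using 1
  simp [sum_filter]

lemma fderiv_phi_apply_single {n k : ℕ} (hkn : k ≤ n) (d x : Fin n → ℝ) {i j : Fin n}
    (hij : i ≠ j) :
    fderiv ℝ (fun y => phi n k d y i) x (Pi.single j 1) =
      -((∑ s ∈ powersetCard (k - 1) (univ.erase i) with j ∈ s,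
          exp (∑ l ∈ s, x l) / (1 + exp ((∑ l ∈ s, x l) + x i)) ^ 2) /
        ∑ s ∈ powersetCard (k - 1) (univ.erase i),
          exp (∑ l ∈ s, x l) / (1 + exp ((∑ l ∈ s, x l) + x i))) := by
  have hdiff : DifferentiableAt ℝ (fun y => phi n k d y i) x := by
    have hpos := sum_exp_div_one_add_exp_pos hkn x i
    unfold phi
    fun_prop (disch := first | positivity | exact hpos.ne')
  rw [← hdiff.lineDeriv_eq_fderiv, (hasLineDerivAt_phi_single hkn d x hij).lineDeriv]

theorem stmt6_general (n k : ℕ) (hk : 2 ≤ k) (hkn : k < n) (d : Fin n → ℝ)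
    (K : ℝ) (hK : 0 ≤ K) (x : Fin n → ℝ) (hx : ‖x‖ ≤ K) (i j : Fin n) (hij : i ≠ j) :
    fderiv ℝ (fun y => phi n k d y i) x (Pi.single j 1) ≤
      -(((k : ℝ) - 1) / (2 * ((n : ℝ) - 1))) * Real.exp (-(4 * ((k : ℝ) - 1) * K)) := by
  have hcard : ((#{s ∈ powersetCard (k - 1) (univ.erase i) | j ∈ s} : ℕ) : ℝ) /
      #(powersetCard (k - 1) (univ.erase i)) = ((k : ℝ) - 1) / (n - 1) := by
    rw [card_filter_mem_div_card_powersetCard (mem_erase.2 ⟨hij.symm, mem_univ j⟩) (by omega)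
      (by simp; omega)]
    simp [Nat.cast_sub (by omega : 1 ≤ n), Nat.cast_sub (by omega : 1 ≤ k)]
  have hk1 : (0 : ℝ) ≤ ((k : ℝ) - 1) / (n - 1) := by rw [← hcard]; positivity
  rw [fderiv_phi_apply_single hkn.le d x hij, neg_mul, neg_le_neg_iff]
  refine le_trans ?_ (mul_card_div_card_le_sum_div_sum (ρ := (1 + exp (k * K))⁻¹)
    (sum_exp_div_one_add_exp_pos hkn.le x i) (by positivity)
    (fun s hs => exp_div_one_add_exp_le
      (le_of_abs_le (abs_sum_add_le_of_mem_powersetCard (by omega) hx hs)))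
    (fun s hs => (le_of_eq (by field_simp)).trans (exp_mul_le_exp_div_one_add_exp_sq
      (abs_sum_add_le_of_mem_powersetCard (by omega) hx (mem_filter.1 hs).1))))
  rw [hcard]
  calc ((k : ℝ) - 1) / (2 * (n - 1)) * exp (-(4 * ((k : ℝ) - 1) * K))
      = ((k : ℝ) - 1) / (n - 1) * (exp (-(4 * ((k : ℝ) - 1) * K)) / 2) := by
        rw [mul_comm (2 : ℝ), ← div_div]; ring
    _ ≤ ((k : ℝ) - 1) / (n - 1) * (1 + exp (k * K))⁻¹ := mul_le_mul_of_nonneg_left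
        (exp_neg_div_two_le_inv_one_add_exp (by exact_mod_cast hk) hK) hk1
    _ = _ := mul_comm _ _

/-- If `K ≥ 0` and `|x|_∞ ≤ K`, then for all indices `i ≠ j`,
`∂φ_i/∂x_j(x) ≤ −((k−1)/(2(n−1)))·e^{−4(k−1)K}`. -/
theorem stmt6 (n k : ℕ) (hk : 2 ≤ k) (hkn : k < n) (d : Fin n → ℝ) (hd : ∀ i, 0 < d i)
    (K : ℝ) (hK : 0 ≤ K) (x : Fin n → ℝ) (hx : ‖x‖ ≤ K) (i j : Fin n) (hij : i ≠ j) :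
    fderiv ℝ (fun y => phi n k d y i) x (Pi.single j 1) ≤
      -(((k : ℝ) - 1) / (2 * ((n : ℝ) - 1))) * Real.exp (-(4 * ((k : ℝ) - 1) * K)) :=
  stmt6_general n k hk hkn d K hK x hx i j hij
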